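/- arXiv:1804.09457 — 8 statements merged into one kernel-verified Lean document; each statement's English description precedes it below -/
import Mathlib

section
/- Let K be a field, n ≥ 2, let T be a consistent diagonal n×n matrix over K, and let A be a traceless n×n matrix over K all of whose off-diagonal entries are nonzero. Then T and A generate the Lie algebra sl_n(K). -/
/-!
The adjoint action of `T = diagonal α` multiplies the entry `(k, l)` of a matrix by `α k - α l`,
so a polynomial `P` in `ad T` multiplies it by `P (α k - α l)`. By consistency, for `i ≠ j` the
value `α i - α j` differs from every other `α k - α l` (the diagonal ones, `0`, included), so
taking for `P` the product of `X - (α k - α l)` over all `(k, l) ≠ (i, j)` turns `A` into a nonzero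
multiple of the matrix unit `E i j`. The off-diagonal matrix units generate `sl_n`, since
`⁅E i i₀, E i₀ i⁆ = E i i - E i₀ i₀`.
-/

def IsConsistent {K : Type} [Field K] {n : ℕ} (α : Fin n → K) : Prop :=
  (∑ i, α i = 0) ∧
  (∀ i, α i ≠ 0) ∧
  (∀ i j, i ≠ j → α i ≠ α j) ∧
  (∀ i j k l : Fin n, α i - α j = α k - α l → (i = j ∧ k = l) ∨ (i = k ∧ j = l))

attribute [local instance 100] LieRing.ofAssociativeRing

open Matrix Polynomial LieSubalgebra

section
variable {R : Type*} [CommRing R] {ι : Type*} [Fintype ι] [DecidableEq ι]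

theorem diagonal_lie_apply (d : ι → R) (X : Matrix ι ι R) (i j : ι) :
    ⁅diagonal d, X⁆ i j = (d i - d j) * X i j := by
  simp only [Ring.lie_def, Matrix.sub_apply, diagonal_mul, mul_diagonal]
  ring

theorem aeval_ad_diagonal_apply (d : ι → R) (P : R[X]) (X : Matrix ι ι R) (i j : ι) :
    aeval (LieAlgebra.ad R (Matrix ι ι R) (diagonal d)) P X i j = P.eval (d i - d j) * X i j := by
  induction P using Polynomial.induction_on generalizing X with
  | C a => simp [Algebra.algebraMap_eq_smul_one]
  | add P Q hP hQ => simp [hP, hQ, add_mul]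
  | monomial k a ih =>
    rw [pow_succ, ← mul_assoc, map_mul, Module.End.mul_apply, aeval_X, ih,
      LieAlgebra.ad_apply, diagonal_lie_apply]
    simp only [eval_mul, eval_X]
    ring

theorem sl_le_of_single_mem (S : LieSubalgebra R (Matrix ι ι R))
    (h : ∀ i j, i ≠ j → single i j (1 : R) ∈ S) : LieAlgebra.SpecialLinear.sl ι R ≤ S := by
  intro x hx
  rcases isEmpty_or_nonempty ι with _ | ⟨⟨i₀⟩⟩
  · simp [Subsingleton.elim x 0, S.zero_mem]
  have hdiag : ∀ i, single i i (1 : R) - single i₀ i₀ 1 ∈ S := by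
    intro i
    by_cases hi : i = i₀
    · simp [hi, S.zero_mem]
    · have : single i i (1 : R) - single i₀ i₀ 1 = ⁅single i i₀ (1 : R), single i₀ i 1⁆ := by
        rw [Ring.lie_def, single_mul_single_same, single_mul_single_same, one_mul]
      exact this ▸ S.lie_mem (h i i₀ hi) (h i₀ i (Ne.symm hi))
  have htr : ∑ i, x i i = 0 := hx
  have hdecomp :
      x = ∑ i, ∑ j, x i j • (single i j (1 : R) - if i = j then single i₀ i₀ 1 else 0) := by
    simp only [smul_sub, Finset.sum_sub_distrib, smul_ite, smul_zero, Finset.sum_ite_eq,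
      Finset.mem_univ, if_true, ← Finset.sum_smul, htr, zero_smul, sub_zero]
    simpa only [smul_single, smul_eq_mul, mul_one] using matrix_eq_sum_single x
  rw [hdecomp]
  refine S.sum_mem fun i _ => S.sum_mem fun j _ => S.smul_mem _ ?_
  by_cases hij : i = j
  · simpa [hij] using hdiag j
  · simpa [hij] using h i j hij
end

section
variable {K : Type*} [Field K] {ι : Type*} [Fintype ι] [DecidableEq ι]

theorem single_mem_of_diagonal_mem {S : LieSubalgebra K (Matrix ι ι K)} {d : ι → K}
    {A : Matrix ι ι K} (hd : diagonal d ∈ S) (hA : A ∈ S) {i j : ι} (hAij : A i j ≠ 0)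
    (hsep : ∀ k l, d k - d l = d i - d j → k = i ∧ l = j) : single i j (1 : K) ∈ S := by
  set P : K[X] := ∏ q ∈ Finset.univ.erase (i, j), (X - C (d q.1 - d q.2))
  have hPA : aeval (LieAlgebra.ad K _ (diagonal d)) P A =
      single i j (P.eval (d i - d j) * A i j) := by
    ext k l
    rw [aeval_ad_diagonal_apply, single_apply]
    split_ifs with h
    · obtain ⟨rfl, rfl⟩ := h
      rfl
    · have : P.eval (d k - d l) = 0 := by
        rw [eval_prod]
        refine Finset.prod_eq_zero (i := (k, l)) ?_ (by simp)
        simpa [Prod.ext_iff, eq_comm] using h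
      simp [this]
  have hPne : P.eval (d i - d j) ≠ 0 := by
    rw [eval_prod, Finset.prod_ne_zero_iff]
    rintro ⟨k, l⟩ hkl
    rw [eval_sub, eval_X, eval_C, sub_ne_zero]
    exact fun h => Finset.ne_of_mem_erase hkl (Prod.ext_iff.2 (hsep k l h.symm))
  have hmem : aeval (LieAlgebra.ad K _ (diagonal d)) P A ∈ S :=
    aeval_apply_smul_mem_of_le_comap hA P _ fun B hB => S.lie_mem hd hB
  rw [hPA] at hmem
  convert S.smul_mem (P.eval (d i - d j) * A i j)⁻¹ hmem
  rw [smul_single, smul_eq_mul, inv_mul_cancel₀ (mul_ne_zero hPne hAij)]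
end

theorem stmt_1_general {K : Type} [Field K] (n : ℕ)
    (α : Fin n → K) (hα : IsConsistent α)
    (A : Matrix (Fin n) (Fin n) K) (htr : A.trace = 0)
    (hoff : ∀ i j, i ≠ j → A i j ≠ 0) :
    LieSubalgebra.lieSpan K (Matrix (Fin n) (Fin n) K) {Matrix.diagonal α, A} =
      LieAlgebra.SpecialLinear.sl (Fin n) K := by
  obtain ⟨hsum, -, -, hdiff⟩ := hα
  have hT : diagonal α ∈ lieSpan K _ {diagonal α, A} := subset_lieSpan (by simp)
  have hA : A ∈ lieSpan K _ {diagonal α, A} := subset_lieSpan (by simp)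
  refine le_antisymm ?_ (sl_le_of_single_mem _ fun i j hij =>
    single_mem_of_diagonal_mem hT hA (hoff i j hij) fun k l h => ?_)
  · rw [lieSpan_le]
    rintro x (rfl | rfl)
    · exact (trace_diagonal α).trans hsum
    · exact htr
  · rcases hdiff k l i j h with ⟨-, rfl⟩ | ⟨rfl, rfl⟩
    · exact absurd rfl hij
    · exact ⟨rfl, rfl⟩

/-- A consistent diagonal matrix `T` and a traceless matrix `A` with all off-diagonal
entries nonzero generate `sl_n(K)`. -/
theorem stmt_1 {K : Type} [Field K] (n : ℕ) (hn : 2 ≤ n)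
    (α : Fin n → K) (hα : IsConsistent α)
    (A : Matrix (Fin n) (Fin n) K) (htr : A.trace = 0)
    (hoff : ∀ i j, i ≠ j → A i j ≠ 0) :
    LieSubalgebra.lieSpan K (Matrix (Fin n) (Fin n) K) {Matrix.diagonal α, A} =
      LieAlgebra.SpecialLinear.sl (Fin n) K :=
  stmt_1_general n α hα A htr hoff
end

section
/- Let K be a field, n ≥ 2, and let B be a fixed matrix in sl_n(K). Then there exists a family S of polynomials over K in the n² matrix-entry variables such that for every X ∈ sl_n(K): X and B generate sl_n(K) if and only if some polynomial in S evaluates to a nonzero value at the entries of X. In particular, the set of X ∈ sl_n(K) such that X and B generate sl_n(K) is open in the Zariski topology on sl_n(K). -/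
/-! The Lie subalgebra generated by `X` and `B` is spanned, as a vector space, by the iterated
brackets (words) in `X` and `B`. It is all of `sl_n(K)`, of dimension `m`, iff some `m` words are
linearly independent, i.e. iff some `m × m` minor of the matrix of their coordinates is nonzero.
Evaluating the same words at the generic matrix `(x_ij)` and at `B` gives matrices of
polynomials whose minors form `S`: entrywise evaluation is a ring homomorphism of matrix rings,
so it commutes with commutators and specializes these minors to the minors for `X`. -/

attribute [local instance 100] LieRing.ofAssociativeRing

open Matrix

def FreeMagma.lieEval {ι L : Type*} [LieRing L] (a : ι → L) : FreeMagma ι → L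
  | FreeMagma.of i => a i
  | FreeMagma.mul x y => ⁅lieEval a x, lieEval a y⁆

theorem LieSubalgebra.coe_lieSpan_range_eq_span_range_lieEval {ι R L : Type*} [CommRing R]
    [LieRing L] [LieAlgebra R L] (a : ι → L) :
    (LieSubalgebra.lieSpan R L (Set.range a) : Submodule R L)
      = Submodule.span R (Set.range (FreeMagma.lieEval a)) := by
  apply le_antisymm
  · intro x hx
    refine LieSubalgebra.lieSpan_induction (R := R)
      (p := fun y _ => y ∈ Submodule.span R (Set.range (FreeMagma.lieEval a))) ?_
      (Submodule.zero_mem _) (fun _ _ _ _ => Submodule.add_mem _)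
      (fun r _ _ => Submodule.smul_mem _ r) ?_ hx
    · rintro _ ⟨i, rfl⟩
      exact Submodule.subset_span ⟨FreeMagma.of i, rfl⟩
    · rintro x y - - hx hy
      induction hx, hy using Submodule.span_induction₂ with
      | mem_mem u v hu hv =>
          obtain ⟨wu, rfl⟩ := hu
          obtain ⟨wv, rfl⟩ := hv
          exact Submodule.subset_span ⟨FreeMagma.mul wu wv, rfl⟩
      | zero_left _ _ => simp
      | zero_right _ _ => simp
      | add_left u v w _ _ _ h1 h2 => rw [add_lie]; exact Submodule.add_mem _ h1 h2
      | add_right u v w _ _ _ h1 h2 => rw [lie_add]; exact Submodule.add_mem _ h1 h2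
      | smul_left r u v _ _ h => rw [smul_lie]; exact Submodule.smul_mem _ r h
      | smul_right r u v _ _ h => rw [lie_smul]; exact Submodule.smul_mem _ r h
  · rw [Submodule.span_le]
    rintro _ ⟨w, rfl⟩
    induction w with
    | ih1 i => exact LieSubalgebra.subset_lieSpan ⟨i, rfl⟩
    | ih2 x y hx hy => exact (LieSubalgebra.lieSpan R L (Set.range a)).lie_mem hx hy

theorem RingHom.map_lie {A A' : Type*} [Ring A] [Ring A'] (f : A →+* A') (x y : A) :
    f ⁅x, y⁆ = ⁅f x, f y⁆ := by
  simp only [Ring.lie_def, map_sub, map_mul]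

theorem RingHom.map_lieEval {ι A A' : Type*} [Ring A] [Ring A'] (f : A →+* A') (a : ι → A)
    (w : FreeMagma ι) : f (FreeMagma.lieEval a w) = FreeMagma.lieEval (f ∘ a) w := by
  induction w with
  | ih1 i => rfl
  | ih2 x y hx hy => exact (f.map_lie _ _).trans (by rw [hx, hy]; rfl)

section LinearAlgebra

variable {K V : Type*} [Field K] [AddCommGroup V] [Module K V]

theorem exists_linearIndependent_comp_of_le_finrank_span [FiniteDimensional K V] {ι : Type*}
    (v : ι → V) {m : ℕ} (hm : m ≤ Module.finrank K (Submodule.span K (Set.range v))) :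
    ∃ f : Fin m → ι, LinearIndependent K (v ∘ f) := by
  obtain ⟨κ, a, -, hspan, hli⟩ := exists_linearIndependent' K v
  have := hli.finite
  have := Fintype.ofFinite κ
  have hcard : Fintype.card κ = Module.finrank K (Submodule.span K (Set.range v)) := by
    rw [← hspan, finrank_span_eq_card hli]
  let e : Fin m ↪ κ := (Fin.castLEEmb (hcard ▸ hm)).trans (Fintype.equivFin κ).symm.toEmbedding
  exact ⟨a ∘ e, hli.comp e e.injective⟩

theorem Submodule.span_range_eq_iff_exists_linearIndependent [FiniteDimensional K V]
    {ι : Type*} {v : ι → V} {W : Submodule K V} (hv : Submodule.span K (Set.range v) ≤ W) :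
    Submodule.span K (Set.range v) = W ↔
      ∃ f : Fin (Module.finrank K W) → ι, LinearIndependent K (v ∘ f) := by
  refine ⟨fun h => exists_linearIndependent_comp_of_le_finrank_span v (by rw [h]), ?_⟩
  rintro ⟨f, hf⟩
  refine Submodule.eq_of_le_of_finrank_le hv ?_
  calc Module.finrank K W
      = Module.finrank K (Submodule.span K (Set.range (v ∘ f))) := by
        rw [finrank_span_eq_card hf, Fintype.card_fin]
    _ ≤ _ := Submodule.finrank_mono (Submodule.span_mono (Set.range_comp_subset_range f v))

end LinearAlgebra

theorem Matrix.linearIndependent_row_iff_exists_det_submatrix_ne_zero {K κ : Type*} [Field K]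
    [Fintype κ] {m : ℕ} (A : Matrix (Fin m) κ K) :
    LinearIndependent K A.row ↔ ∃ g : Fin m → κ, (A.submatrix id g).det ≠ 0 := by
  simp_rw [ne_eq, ← isUnit_iff_ne_zero, ← isUnit_iff_isUnit_det]
  constructor
  · intro hA
    have hm : m ≤ Module.finrank K (Submodule.span K (Set.range A.col)) := by
      rw [← rank_eq_finrank_span_cols, hA.rank_matrix, Fintype.card_fin]
    obtain ⟨g, hg⟩ := exists_linearIndependent_comp_of_le_finrank_span A.col hm
    exact ⟨g, linearIndependent_cols_iff_isUnit.mp hg⟩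
  · rintro ⟨g, hg⟩
    have hrows : LinearIndependent K (LinearMap.funLeft K K g ∘ A.row) :=
      linearIndependent_rows_iff_isUnit.mpr hg
    exact hrows.of_comp

theorem Submodule.span_range_eq_iff_exists_det_ne_zero {K ι m n : Type*} [Field K] [Fintype m]
    [Fintype n] {v : ι → Matrix m n K} {W : Submodule K (Matrix m n K)} (hv : Submodule.span K (Set.range v) ≤ W) :
    Submodule.span K (Set.range v) = W ↔
      ∃ (f : Fin (Module.finrank K W) → ι) (g : Fin (Module.finrank K W) → m × n),
        (Matrix.of fun i j => v (f i) (g j).1 (g j).2).det ≠ 0 := by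
  rw [Submodule.span_range_eq_iff_exists_linearIndependent hv]
  refine exists_congr fun f => ?_
  let e : Matrix m n K ≃ₗ[K] (m × n → K) := (LinearEquiv.curry K K m n).symm
  rw [← e.toLinearMap.linearIndependent_iff e.ker]
  exact linearIndependent_row_iff_exists_det_submatrix_ne_zero (Matrix.of fun i => e (v (f i)))

theorem LieSubalgebra.lieSpan_range_eq_iff_exists_det_ne_zero {K ι n : Type*} [Field K]
    [Fintype n] [DecidableEq n] (a : ι → Matrix n n K) (L : LieSubalgebra K (Matrix n n K))
    (ha : ∀ i, a i ∈ L) :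
    LieSubalgebra.lieSpan K _ (Set.range a) = L ↔
      ∃ (f : Fin (Module.finrank K L.toSubmodule) → FreeMagma ι)
        (g : Fin (Module.finrank K L.toSubmodule) → n × n),
        (Matrix.of fun i j => FreeMagma.lieEval a (f i) (g j).1 (g j).2).det ≠ 0 := by
  have hle : Submodule.span K (Set.range (FreeMagma.lieEval a)) ≤ L.toSubmodule := by
    rw [← coe_lieSpan_range_eq_span_range_lieEval, toSubmodule_le_toSubmodule, lieSpan_le]
    rintro _ ⟨i, rfl⟩
    exact ha i
  rw [← toSubmodule_inj, coe_lieSpan_range_eq_span_range_lieEval,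
    Submodule.span_range_eq_iff_exists_det_ne_zero hle]

theorem Matrix.mapMatrix_eval_lieEval_mvPolynomialX {K n : Type*} [CommRing K] [Fintype n]
    [DecidableEq n] (X B : Matrix n n K) (w : FreeMagma (Fin 2)) :
    (MvPolynomial.eval fun q : n × n => X q.1 q.2).mapMatrix
        (FreeMagma.lieEval ![mvPolynomialX n n K, B.map MvPolynomial.C] w) =
      FreeMagma.lieEval ![X, B] w := by
  rw [RingHom.map_lieEval]
  congr 1
  ext i : 1
  fin_cases i
  · exact mvPolynomialX_map_eval₂ (RingHom.id K) X
  · ext; simp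

theorem stmt_5_general {K : Type} [Field K] (n : ℕ)
    (B : Matrix (Fin n) (Fin n) K) (hB : B ∈ LieAlgebra.SpecialLinear.sl (Fin n) K) :
    ∃ S : Set (MvPolynomial (Fin n × Fin n) K),
      ∀ X : Matrix (Fin n) (Fin n) K, X ∈ LieAlgebra.SpecialLinear.sl (Fin n) K →
        ((LieSubalgebra.lieSpan K (Matrix (Fin n) (Fin n) K) {X, B} =
            LieAlgebra.SpecialLinear.sl (Fin n) K) ↔
          ∃ p ∈ S, MvPolynomial.eval (fun q : Fin n × Fin n => X q.1 q.2) p ≠ 0) := by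
  set m := Module.finrank K (LieAlgebra.SpecialLinear.sl (Fin n) K).toSubmodule
  let genericWord := FreeMagma.lieEval ![mvPolynomialX (Fin n) (Fin n) K, B.map MvPolynomial.C]
  refine ⟨{p | ∃ (f : Fin m → FreeMagma (Fin 2)) (g : Fin m → Fin n × Fin n),
    p = (Matrix.of fun i j => genericWord (f i) (g j).1 (g j).2).det}, fun X hX => ?_⟩
  have hdet (f : Fin m → FreeMagma (Fin 2)) (g : Fin m → Fin n × Fin n) :
      MvPolynomial.eval (fun q : Fin n × Fin n => X q.1 q.2)
          (Matrix.of fun i j => genericWord (f i) (g j).1 (g j).2).det =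
        (Matrix.of fun i j => FreeMagma.lieEval ![X, B] (f i) (g j).1 (g j).2).det := by
    rw [RingHom.map_det]
    congr 1
    ext i j
    exact congrFun₂ (mapMatrix_eval_lieEval_mvPolynomialX X B (f i)) _ _
  rw [← range_cons_cons_empty X B ![], LieSubalgebra.lieSpan_range_eq_iff_exists_det_ne_zero]
  · constructor
    · rintro ⟨f, g, h⟩
      exact ⟨_, ⟨f, g, rfl⟩, (hdet f g).trans_ne h⟩
    · rintro ⟨_, ⟨f, g, rfl⟩, h⟩
      exact ⟨f, g, (hdet f g).symm.trans_ne h⟩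
  · intro i
    fin_cases i
    exacts [hX, hB]

/-- For a fixed `B ∈ sl_n(K)`, there is a family `S` of polynomials in the `n²` matrix
entries such that a traceless matrix `X` generates `sl_n(K)` together with `B` iff some
polynomial in `S` is nonzero at the entries of `X`; in particular this set of `X` is a
union of nonvanishing loci of polynomials, hence Zariski open in `sl_n(K)`. -/
theorem stmt_5 {K : Type} [Field K] (n : ℕ) (hn : 2 ≤ n)
    (B : Matrix (Fin n) (Fin n) K) (hB : B ∈ LieAlgebra.SpecialLinear.sl (Fin n) K) :
    ∃ S : Set (MvPolynomial (Fin n × Fin n) K),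
      ∀ X : Matrix (Fin n) (Fin n) K, X ∈ LieAlgebra.SpecialLinear.sl (Fin n) K →
        ((LieSubalgebra.lieSpan K (Matrix (Fin n) (Fin n) K) {X, B} =
            LieAlgebra.SpecialLinear.sl (Fin n) K) ↔
          ∃ p ∈ S, MvPolynomial.eval (fun q : Fin n × Fin n => X q.1 q.2) p ≠ 0) :=
  stmt_5_general n B hB
end

section
/- Let K be a field, n ≥ 2, and let B, X_0 ∈ sl_n(K) be such that X_0 and B generate sl_n(K). Then there exists a polynomial F over K in the n² matrix-entry variables such that F evaluated at the entries of X_0 is nonzero, and for every X ∈ sl_n(K), if F evaluated at the entries of X is nonzero then X and B generate sl_n(K). -/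
attribute [local instance 100] LieRing.ofAssociativeRing

/-!
Evaluating the free Lie algebra on two letters at `(X, B)` gives a linear map whose range is
`lieSpan {X, B}`. Choose finitely many words whose values at `X₀` form a basis of `sl_n`. The
entries of these values are polynomials in the entries of `X`, and `F` is a maximal minor of
the resulting coordinate matrix which does not vanish at `X₀`. Wherever `F ≠ 0` the values stay
linearly independent, so `lieSpan {X, B} ⊆ sl_n` has dimension at least `dim sl_n`.
-/

open Matrix

theorem Matrix.linearIndependent_row_iff_exists_det_submatrix_ne_zero_s6 {K ι α : Type*} [Field K]
    [Fintype ι] [DecidableEq ι] [Fintype α] {M : Matrix ι α K} :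
    LinearIndependent K M.row ↔ ∃ φ : ι → α, (M.submatrix id φ).det ≠ 0 := by
  constructor
  · intro h
    have hcols : Submodule.span K (Set.range M.col) = ⊤ :=
      Submodule.eq_top_of_finrank_eq <| by
        rw [← rank_eq_finrank_span_cols, h.rank_matrix, Module.finrank_fintype_fun_eq_card]
    obtain ⟨κ, a, -, hspan, hli⟩ := exists_linearIndependent' K M.col
    let b := Module.Basis.mk hli (by rw [hspan, hcols])
    let e := b.indexEquiv (Pi.basisFun K ι)
    refine ⟨a ∘ e.symm, ?_⟩
    rw [← isUnit_iff_ne_zero, ← isUnit_iff_isUnit_det, ← linearIndependent_cols_iff_isUnit]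
    exact hli.comp e.symm e.symm.injective
  · rintro ⟨φ, hφ⟩
    have hrows : LinearIndependent K (M.submatrix id φ).row :=
      linearIndependent_rows_iff_isUnit.2 <| (isUnit_iff_isUnit_det _).2 hφ.isUnit
    exact hrows.of_comp (LinearMap.funLeft K K φ)

theorem Matrix.linearIndependent_iff_uncurry {K ι m n : Type*} [Ring K]
    {v : ι → Matrix m n K} :
    LinearIndependent K v ↔ LinearIndependent K fun i (q : m × n) => v i q.1 q.2 := by
  let e : Matrix m n K ≃ₗ[K] (m × n → K) :=
    (Matrix.ofLinearEquiv K).symm.trans (LinearEquiv.curry K K m n).symm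
  exact ⟨fun h => h.map' e.toLinearMap e.ker, fun h => h.of_comp e.toLinearMap⟩

theorem Submodule.eq_of_le_of_linearIndependent {K V ι : Type*} [Field K] [AddCommGroup V]
    [Module K V] [Fintype ι] {p q : Submodule K V} [FiniteDimensional K q] (hpq : p ≤ q)
    {v : ι → V} (hv : LinearIndependent K v) (hvp : ∀ i, v i ∈ p)
    (hcard : Module.finrank K q ≤ Fintype.card ι) : p = q := by
  have := Submodule.finiteDimensional_of_le hpq
  refine Submodule.eq_of_le_of_finrank_le hpq (hcard.trans ?_)
  rw [← finrank_span_eq_card hv]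
  exact Submodule.finrank_mono (Submodule.span_le.2 <| Set.range_subset_iff.2 hvp)

theorem LinearIndependent.exists_mvPolynomial_eval_ne_zero {K ι α σ : Type*} [Field K]
    [Fintype ι] [Fintype α] {p : ι → α → MvPolynomial σ K} {x₀ : σ → K}
    (h : LinearIndependent K fun i j => MvPolynomial.eval x₀ (p i j)) :
    ∃ F : MvPolynomial σ K, MvPolynomial.eval x₀ F ≠ 0 ∧
      ∀ x, MvPolynomial.eval x F ≠ 0 →
        LinearIndependent K fun i j => MvPolynomial.eval x (p i j) := by
  classical
  have eval_det (x : σ → K) (φ : ι → α) :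
      MvPolynomial.eval x (Matrix.of p |>.submatrix id φ).det =
        (Matrix.of (fun i j => MvPolynomial.eval x (p i j)) |>.submatrix id φ).det :=
    RingHom.map_det _ _
  obtain ⟨φ, hφ⟩ := linearIndependent_row_iff_exists_det_submatrix_ne_zero_s6.1 h
  refine ⟨(Matrix.of p |>.submatrix id φ).det, by rwa [eval_det], fun x hx => ?_⟩
  rw [eval_det] at hx
  exact linearIndependent_row_iff_exists_det_submatrix_ne_zero_s6.2 ⟨φ, hx⟩

namespace FreeLieAlgebra

variable {R X L : Type*} [CommRing R] [LieRing L] [LieAlgebra R L]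

theorem comp_lift {L' : Type*} [LieRing L'] [LieAlgebra R L'] (g : L →ₗ⁅R⁆ L')
    (f : X → L) :
    g.comp (lift R f) = lift R (g ∘ f) :=
  (lift_unique _ _).1 <| funext fun x => by simp

theorem range_lift (f : X → L) : (lift R f).range = LieSubalgebra.lieSpan R L (Set.range f) := by
  refine le_antisymm ?_ (LieSubalgebra.lieSpan_le.2 ?_)
  · let f' : X → LieSubalgebra.lieSpan R L (Set.range f) :=
      fun x => ⟨f x, LieSubalgebra.subset_lieSpan ⟨x, rfl⟩⟩
    have : (lift R f) = (LieSubalgebra.lieSpan R L (Set.range f)).incl.comp (lift R f') := by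
      rw [comp_lift]; rfl
    rintro _ ⟨w, rfl⟩
    rw [this]
    exact (lift R f' w).2
  · rintro _ ⟨x, rfl⟩
    exact ⟨of R x, lift_of_apply f x⟩

end FreeLieAlgebra

theorem Matrix.mapMatrix_aeval_lift_mvPolynomialX {K m : Type*} [CommRing K] [Fintype m]
    [DecidableEq m]
    (X B : Matrix m m K) (w : FreeLieAlgebra K (Fin 2)) :
    (MvPolynomial.aeval fun q : m × m => X q.1 q.2).mapMatrix
      (FreeLieAlgebra.lift K ![mvPolynomialX m m K, B.map MvPolynomial.C] w) =
        FreeLieAlgebra.lift K ![X, B] w := by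
  let g : Matrix m m (MvPolynomial (m × m) K) →ₗ⁅K⁆ Matrix m m K :=
    (MvPolynomial.aeval fun q : m × m => X q.1 q.2).mapMatrix.toLieHom
  have hg : g ∘ ![mvPolynomialX m m K, B.map MvPolynomial.C] = ![X, B] := by
    funext i
    fin_cases i
    · exact mvPolynomialX_mapMatrix_aeval K X
    · ext; simp [g]
  exact LieHom.congr_fun (hg ▸ FreeLieAlgebra.comp_lift g _) w

theorem stmt_6_general {K : Type} [Field K] (n : ℕ)
    (B X₀ : Matrix (Fin n) (Fin n) K)
    (hgen : LieSubalgebra.lieSpan K (Matrix (Fin n) (Fin n) K) {X₀, B} =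
      LieAlgebra.SpecialLinear.sl (Fin n) K) :
    ∃ F : MvPolynomial (Fin n × Fin n) K,
      MvPolynomial.eval (fun q : Fin n × Fin n => X₀ q.1 q.2) F ≠ 0 ∧
      ∀ X : Matrix (Fin n) (Fin n) K, X ∈ LieAlgebra.SpecialLinear.sl (Fin n) K →
        MvPolynomial.eval (fun q : Fin n × Fin n => X q.1 q.2) F ≠ 0 →
        LieSubalgebra.lieSpan K (Matrix (Fin n) (Fin n) K) {X, B} =
          LieAlgebra.SpecialLinear.sl (Fin n) K := by
  classical
  have hrange (X : Matrix (Fin n) (Fin n) K) :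
      (FreeLieAlgebra.lift K ![X, B]).range = LieSubalgebra.lieSpan K _ {X, B} := by
    rw [FreeLieAlgebra.range_lift, Matrix.range_cons_cons_empty]
  obtain ⟨κ, w, -, hspan, hli⟩ :=
    exists_linearIndependent' K (FreeLieAlgebra.lift K ![X₀, B])
  have : Fintype κ := have := hli.finite; Fintype.ofFinite κ
  have hcard : Module.finrank K (LieAlgebra.SpecialLinear.sl (Fin n) K).toSubmodule =
      Fintype.card κ := by
    rw [← finrank_span_eq_card hli, hspan, ← LieHom.coe_range, hrange, hgen,
      ← LieSubalgebra.coe_toSubmodule, Submodule.span_eq]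
  have eval_words (X : Matrix (Fin n) (Fin n) K) :
      (fun i (q : Fin n × Fin n) => MvPolynomial.eval (fun q => X q.1 q.2)
        (FreeLieAlgebra.lift K ![mvPolynomialX _ _ K, B.map MvPolynomial.C] (w i) q.1 q.2)) =
        fun i q => FreeLieAlgebra.lift K ![X, B] (w i) q.1 q.2 := by
    simp only [← mapMatrix_aeval_lift_mvPolynomialX X B, ← MvPolynomial.coe_aeval_eq_eval]
    rfl
  obtain ⟨F, hF₀, hF⟩ := LinearIndependent.exists_mvPolynomial_eval_ne_zero
    (eval_words X₀ ▸ Matrix.linearIndependent_iff_uncurry.1 hli)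
  refine ⟨F, hF₀, fun X hX hFX => ?_⟩
  have hB : B ∈ LieAlgebra.SpecialLinear.sl (Fin n) K :=
    hgen ▸ LieSubalgebra.subset_lieSpan (by simp)
  refine LieSubalgebra.toSubmodule_injective <| Submodule.eq_of_le_of_linearIndependent
    ((LieSubalgebra.toSubmodule_le_toSubmodule _ _).2 <| LieSubalgebra.lieSpan_le.2 ?_)
    (Matrix.linearIndependent_iff_uncurry.2 (eval_words X ▸ hF _ hFX))
    (fun i => hrange X ▸ (FreeLieAlgebra.lift K ![X, B]).mem_range_self (w i)) hcard.le
  rintro _ (rfl | rfl)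
  exacts [hX, hB]

/-- If `X₀` and `B` generate `sl_n(K)`, then there is a polynomial `F` in the `n²` matrix
entries which is nonzero at the entries of `X₀` and such that any traceless `X` at whose
entries `F` is nonzero also generates `sl_n(K)` together with `B`. -/
theorem stmt_6 {K : Type} [Field K] (n : ℕ) (hn : 2 ≤ n)
    (B X₀ : Matrix (Fin n) (Fin n) K)
    (hB : B ∈ LieAlgebra.SpecialLinear.sl (Fin n) K)
    (hX₀ : X₀ ∈ LieAlgebra.SpecialLinear.sl (Fin n) K)
    (hgen : LieSubalgebra.lieSpan K (Matrix (Fin n) (Fin n) K) {X₀, B} =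
      LieAlgebra.SpecialLinear.sl (Fin n) K) :
    ∃ F : MvPolynomial (Fin n × Fin n) K,
      MvPolynomial.eval (fun q : Fin n × Fin n => X₀ q.1 q.2) F ≠ 0 ∧
      ∀ X : Matrix (Fin n) (Fin n) K, X ∈ LieAlgebra.SpecialLinear.sl (Fin n) K →
        MvPolynomial.eval (fun q : Fin n × Fin n => X q.1 q.2) F ≠ 0 →
        LieSubalgebra.lieSpan K (Matrix (Fin n) (Fin n) K) {X, B} =
          LieAlgebra.SpecialLinear.sl (Fin n) K :=
  stmt_6_general n B X₀ hgen
end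

section
/- Let n ≥ 3 be an odd integer. Then the n distinct complex n-th roots of unity, listed in any order as a tuple (ζ_1,…,ζ_n), form a consistent tuple of complex numbers. -/
/-!
The roots lie on the unit circle, where conjugation is inversion. If `ζ i - ζ j = ζ k - ζ l`,
then `ζ i + ζ l = ζ k + ζ j`, and this sum is nonzero since for odd `n` no root is the negative
of another; conjugating gives `ζ i⁻¹ + ζ l⁻¹ = ζ k⁻¹ + ζ j⁻¹`, hence equal products, so the pairs
`{ζ i, ζ l}` and `{ζ k, ζ j}` coincide. The sum of all roots is the geometric sum of a primitive
root, which vanishes.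
-/

open Polynomial

theorem IsPrimitiveRoot.sum_eq_sum_nthRootsFinset {R ι : Type*} [CommRing R] [IsDomain R]
    [Fintype ι] {ξ : R} {n : ℕ} (hξ : IsPrimitiveRoot ξ n) (hn : 0 < n)
    (hcard : Fintype.card ι = n) {f : ι → R} (hf : Function.Injective f)
    (hroot : ∀ i, f i ^ n = 1) :
    ∑ i, f i = ∑ x ∈ nthRootsFinset n (1 : R), x := by
  classical
  have himage : Finset.univ.image f = nthRootsFinset n (1 : R) := by
    refine Finset.eq_of_subset_of_card_le ?_ ?_
    · rintro _ hx
      obtain ⟨i, -, rfl⟩ := Finset.mem_image.mp hx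
      exact (Polynomial.mem_nthRootsFinset hn 1).mpr (hroot i)
    · rw [hξ.card_nthRootsFinset, Finset.card_image_of_injective _ hf, Finset.card_univ, hcard]
  rw [← himage, Finset.sum_image fun i _ j _ h => hf h]

theorem IsPrimitiveRoot.sum_nthRootsFinset_eq_zero {R : Type*} [CommRing R] [IsDomain R]
    {ξ : R} {n : ℕ} (hξ : IsPrimitiveRoot ξ n) (hn : 1 < n) :
    ∑ x ∈ nthRootsFinset n (1 : R), x = 0 := by
  have hpow_inj : Function.Injective fun i : Fin n => ξ ^ (i : ℕ) :=
    fun i j h => Fin.ext (hξ.pow_inj i.isLt j.isLt h)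
  have hpow_root (i : Fin n) : (ξ ^ (i : ℕ)) ^ n = 1 := by
    rw [← pow_mul, mul_comm, pow_mul, hξ.pow_eq_one, one_pow]
  rw [← hξ.sum_eq_sum_nthRootsFinset (by omega) (Fintype.card_fin n) hpow_inj hpow_root,
    Fin.sum_univ_eq_sum_range (ξ ^ ·), hξ.geom_sum_eq_zero hn]

theorem add_ne_zero_of_pow_eq_one_of_odd {R : Type*} [Ring R] [Nontrivial R]
    (hR : ringChar R ≠ 2) {n : ℕ} (hn : Odd n) {a b : R} (ha : a ^ n = 1) (hb : b ^ n = 1) :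
    a + b ≠ 0 := by
  intro hab
  rw [eq_neg_of_add_eq_zero_right hab, hn.neg_pow, ha] at hb
  exact Ring.neg_one_ne_one_of_char_ne_two hR hb

theorem eq_or_eq_of_add_eq_add_of_mul_eq_mul {R : Type*} [CommRing R] [NoZeroDivisors R]
    {a b c d : R} (hsum : a + b = c + d) (hprod : a * b = c * d) : a = c ∨ a = d := by
  have hfactor : (a - c) * (a - d) = 0 := by linear_combination a * hsum - hprod
  rcases mul_eq_zero.mp hfactor with h | h
  · exact .inl (sub_eq_zero.mp h)
  · exact .inr (sub_eq_zero.mp h)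

namespace Complex

open ComplexConjugate

theorem mul_eq_mul_of_add_eq_add_of_norm_eq_one {a b c d : ℂ} (ha : ‖a‖ = 1) (hb : ‖b‖ = 1)
    (hc : ‖c‖ = 1) (hd : ‖d‖ = 1) (hsum : a + b = c + d) (hne : a + b ≠ 0) :
    a * b = c * d := by
  have hinv : a⁻¹ + b⁻¹ = c⁻¹ + d⁻¹ := by
    simpa only [inv_eq_conj, ha, hb, hc, hd, map_add] using congrArg conj hsum
  have h0 : ∀ {z : ℂ}, ‖z‖ = 1 → z ≠ 0 := fun hz h => by simp [h] at hz
  rw [inv_add_inv (h0 ha) (h0 hb), inv_add_inv (h0 hc) (h0 hd), hsum,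
    div_eq_mul_inv, div_eq_mul_inv] at hinv
  exact inv_injective (mul_left_cancel₀ (hsum ▸ hne) hinv)

theorem eq_and_eq_or_eq_and_eq_of_sub_eq_sub_of_norm_eq_one {a b c d : ℂ} (ha : ‖a‖ = 1)
    (hb : ‖b‖ = 1) (hc : ‖c‖ = 1) (hd : ‖d‖ = 1) (hsub : a - b = c - d) (hne : a + d ≠ 0) :
    (a = b ∧ c = d) ∨ (a = c ∧ b = d) := by
  have hsum : a + d = c + b := by linear_combination hsub
  have hprod := mul_eq_mul_of_add_eq_add_of_norm_eq_one ha hd hc hb hsum hne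
  rcases eq_or_eq_of_add_eq_add_of_mul_eq_mul hsum hprod with rfl | rfl
  · exact .inr ⟨rfl, by linear_combination -hsub⟩
  · exact .inl ⟨rfl, by linear_combination -hsub⟩

end Complex

/-- For odd `n ≥ 3`, any enumeration of the `n` distinct complex `n`-th roots of unity
is a consistent tuple. -/
theorem stmt_10 (n : ℕ) (hn : 3 ≤ n) (hodd : Odd n) (ζ : Fin n → ℂ)
    (hroot : ∀ i, ζ i ^ n = 1) (hinj : Function.Injective ζ) :
    IsConsistent ζ := by
  have hn0 : n ≠ 0 := by omega
  have hnorm (i : Fin n) : ‖ζ i‖ = 1 := Complex.norm_eq_one_of_pow_eq_one (hroot i) hn0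
  have hξ := Complex.isPrimitiveRoot_exp n hn0
  refine ⟨?_, fun i h => by simpa [h] using hnorm i, fun i j hij h => hij (hinj h),
    fun i j k l h => ?_⟩
  · rw [hξ.sum_eq_sum_nthRootsFinset (by omega) (Fintype.card_fin n) hinj hroot,
      hξ.sum_nthRootsFinset_eq_zero (by omega)]
  · have hne := add_ne_zero_of_pow_eq_one_of_odd (by simp [ringChar.eq_zero]) hodd
      (hroot i) (hroot l)
    exact (Complex.eq_and_eq_or_eq_and_eq_of_sub_eq_sub_of_norm_eq_one (hnorm i) (hnorm j)
      (hnorm k) (hnorm l) h hne).imp (.imp (hinj ·) (hinj ·)) (.imp (hinj ·) (hinj ·))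
end

section
/- Let K be a field, n ≥ 2, and let α_1,…,α_n ∈ K satisfy: (1) α_1+⋯+α_n = 0; (2) α_{i+1} ≠ α_i for all i = 1,…,n−1; (3) α_{i+1} − α_i = α_{k+1} − α_k only if i = k; (4) the partial sums s_k = α_1+⋯+α_k are nonzero for all k = 1,…,n−1. Then the nilpotent matrices A = Σ_{i=1}^{n−1} E_{i,i+1} and B = Σ_{i=1}^{n−1} s_i E_{i+1,i} generate the Lie algebra sl_n(K). -/
/-!
Write `A = ∑ E_{i,i+1}` and `B = ∑ sᵢ E_{i+1,i}`. Since `E_{i,i+1} E_{j+1,j}` vanishes for `i ≠ j`,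
`[A, B] = ∑ sᵢ (E_{i,i} - E_{i+1,i+1})`, which is `diag(α₁, …, αₙ)` because `sₖ - sₖ₋₁ = αₖ` and
`s₀ = sₙ = 0`. Under `ad (diag α)` the summands of `A` and `B` are eigenvectors with eigenvalues
`±(αᵢ - αᵢ₊₁)`, which are pairwise distinct, so each `E_{i,i+1}` and each `sᵢ E_{i+1,i}` lies in the
generated subalgebra; as `sᵢ ≠ 0`, so does `E_{i+1,i}`. Brackets of neighbouring matrix units then
give every `E_{i,j}` with `i ≠ j`, and these generate `sl_n`.
-/

attribute [local instance 100] LieRing.ofAssociativeRing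

open Matrix

theorem Submodule.mem_of_sum_mem_of_apply_eq_smul {K M ι : Type*} [Field K] [AddCommGroup M]
    [Module K M] {p : Submodule K M} {T : Module.End K M}
    (hT : ∀ x ∈ p, T x ∈ p) {μ : ι → K} (s : Finset ι) (hμ : Set.InjOn μ s) (v : ι → M)
    (hv : ∀ i ∈ s, T (v i) = μ i • v i) (hsum : ∑ i ∈ s, v i ∈ p) :
    ∀ i ∈ s, v i ∈ p := by
  classical
  induction s using Finset.induction_on generalizing v with
  | empty => simp
  | @insert a s ha ih =>
    rw [Finset.sum_insert ha] at hsum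
    -- `T - μ a` kills `v a` and rescales every other `v i` by `μ i - μ a ≠ 0`.
    have hshift : T (v a + ∑ i ∈ s, v i) - μ a • (v a + ∑ i ∈ s, v i)
        = ∑ i ∈ s, (μ i - μ a) • v i := by
      simp only [map_add, map_sum, hv a (Finset.mem_insert_self a s), smul_add, Finset.smul_sum,
        sub_smul, Finset.sum_sub_distrib]
      rw [Finset.sum_congr rfl fun i hi => hv i (Finset.mem_insert_of_mem hi)]
      abel
    have hrest : ∀ i ∈ s, v i ∈ p := by
      intro i hi
      have hne : μ i - μ a ≠ 0 := sub_ne_zero.mpr fun h =>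
        ha (hμ (Finset.mem_insert_of_mem hi) (Finset.mem_insert_self a s) h ▸ hi)
      refine (p.smul_mem_iff hne).mp
        (ih (hμ.mono (by simp)) (fun i => (μ i - μ a) • v i) (fun j hj => ?_) ?_ i hi)
      · rw [map_smul, hv j (Finset.mem_insert_of_mem hj), smul_comm]
      · exact hshift ▸ p.sub_mem (hT _ hsum) (p.smul_mem _ hsum)
    intro i hi
    rcases Finset.mem_insert.mp hi with rfl | hi
    · simpa using p.sub_mem hsum (p.sum_mem hrest)
    · exact hrest i hi

namespace Matrix

variable {n R : Type*} [DecidableEq n] [Fintype n] [CommRing R]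

theorem diagonal_lie_single (d : n → R) (i j : n) (c : R) :
    ⁅diagonal d, single i j c⁆ = (d i - d j) • single i j c := by
  ext a b
  by_cases ha : i = a <;> by_cases hb : j = b <;>
    simp [Ring.lie_def, single, ha, hb, mul_sub, mul_comm]

theorem single_mem_of_sum_single_mem {K ι : Type*} [Field K] [Fintype ι]
    {L : LieSubalgebra K (Matrix n n K)} {d : n → K} (hd : diagonal d ∈ L) {f g : ι → n}
    (hfg : Function.Injective fun x => d (f x) - d (g x)) (a : ι → K)
    (hsum : ∑ x, single (f x) (g x) (a x) ∈ L) (x : ι) : single (f x) (g x) (a x) ∈ L :=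
  Submodule.mem_of_sum_mem_of_apply_eq_smul (p := L.toSubmodule)
    (T := LieAlgebra.ad K _ (diagonal d)) (fun _ hy => L.lie_mem hd hy) Finset.univ
    hfg.injOn _ (fun y _ => diagonal_lie_single d (f y) (g y) (a y)) hsum x (Finset.mem_univ x)

theorem single_lie_single_of_ne {i k : n} (j : n) (h : k ≠ i) (c d : R) :
    ⁅single i j c, single j k d⁆ = single i k (c * d) := by
  rw [Ring.lie_def, single_mul_single_same, single_mul_single_of_ne (c := d) j k i h, sub_zero]

theorem single_lie_single_self (i j : n) :
    ⁅single i j (1 : R), single j i (1 : R)⁆ = single i i (1 : R) - single j j 1 := by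
  rw [Ring.lie_def, single_mul_single_same, single_mul_single_same, one_mul]

theorem sl_le_of_single_mem {L : LieSubalgebra R (Matrix n n R)}
    (hL : ∀ i j, i ≠ j → single i j (1 : R) ∈ L) : LieAlgebra.SpecialLinear.sl n R ≤ L := by
  intro X (hX : X.trace = 0)
  rcases isEmpty_or_nonempty n with hn | ⟨⟨i₀⟩⟩
  · exact Subsingleton.elim X 0 ▸ L.zero_mem
  have hoff : ∀ Y : Matrix n n R, (∀ i, Y i i = 0) → Y ∈ L := by
    intro Y hY
    rw [matrix_eq_sum_single Y]
    refine L.sum_mem fun i _ => L.sum_mem fun j _ => ?_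
    obtain rfl | hij := eq_or_ne i j
    · simp [hY]
    · simpa [smul_single] using L.smul_mem (Y i j) (hL i j hij)
  have hdiag : ∀ i, single i i (1 : R) - single i₀ i₀ 1 ∈ L := by
    intro i
    obtain rfl | hi := eq_or_ne i i₀
    · simp
    · exact single_lie_single_self (R := R) i i₀ ▸ L.lie_mem (hL i i₀ hi) (hL i₀ i hi.symm)
  set D := ∑ i, X i i • (single i i (1 : R) - single i₀ i₀ 1)
  rw [← sub_add_cancel X D]
  refine L.add_mem (hoff _ fun j => ?_) (L.sum_mem fun i _ => L.smul_mem _ (hdiag i))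
  have : ∑ i, X i i = 0 := hX
  simp [D, sum_apply, single_apply, mul_sub, Finset.sum_sub_distrib, this]

end Matrix

namespace Matrix

variable {R : Type*} [CommRing R] {m : ℕ}

theorem single_mem_of_single_castSucc_succ_mem
    {L : LieSubalgebra R (Matrix (Fin (m + 1)) (Fin (m + 1)) R)}
    (hup : ∀ i : Fin m, single i.castSucc i.succ (1 : R) ∈ L)
    (hdown : ∀ i : Fin m, single i.succ i.castSucc (1 : R) ∈ L) :
    ∀ i j, i ≠ j → single i j (1 : R) ∈ L := by
  suffices h : ∀ j : Fin (m + 1), ∀ i < j, single i j (1 : R) ∈ L ∧ single j i (1 : R) ∈ L by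
    intro i j hij
    rcases hij.lt_or_gt with hij | hij
    · exact (h j i hij).1
    · exact (h i j hij).2
  intro j
  induction j using Fin.induction with
  | zero => simp
  | succ k ih =>
    intro i hi
    rcases (Fin.le_castSucc_iff.mpr hi).lt_or_eq with hi | rfl
    · have hne : k.succ ≠ i := (hi.trans k.castSucc_lt_succ).ne'
      constructor
      · simpa [single_lie_single_of_ne _ hne] using L.lie_mem (ih i hi).1 (hup k)
      · simpa [single_lie_single_of_ne _ hne.symm] using L.lie_mem (hdown k) (ih i hi).2
    · exact ⟨hup k, hdown k⟩

def superdiag (a : Fin m → R) : Matrix (Fin (m + 1)) (Fin (m + 1)) R :=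
  ∑ i, single i.castSucc i.succ (a i)

def subdiag (a : Fin m → R) : Matrix (Fin (m + 1)) (Fin (m + 1)) R :=
  ∑ i, single i.succ i.castSucc (a i)

theorem of_eq_superdiag (f : Fin (m + 1) → Fin (m + 1) → R) :
    (of fun i j : Fin (m + 1) => if (i : ℕ) + 1 = j then f i j else 0) =
      superdiag fun k => f k.castSucc k.succ := by
  ext i j
  induction i using Fin.lastCases with
  | last => simp [superdiag, sum_apply, Fin.castSucc_ne_last]; omega
  | cast k =>
    induction j using Fin.cases with
    | zero => simp [superdiag, sum_apply, Fin.succ_ne_zero]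
    | succ l =>
      rcases eq_or_ne k l with rfl | hkl
      · simp [superdiag, sum_apply, single_apply]
      · simp [superdiag, sum_apply, single_apply, ite_and, Fin.val_ne_iff.mpr hkl, hkl]

theorem of_eq_subdiag (f : Fin (m + 1) → Fin (m + 1) → R) :
    (of fun i j : Fin (m + 1) => if (i : ℕ) = j + 1 then f i j else 0) =
      subdiag fun k => f k.succ k.castSucc := by
  ext i j
  induction j using Fin.lastCases with
  | last => simp [subdiag, sum_apply, Fin.castSucc_ne_last]; omega
  | cast k =>
    induction i using Fin.cases with
    | zero => simp [subdiag, sum_apply, Fin.succ_ne_zero]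
    | succ l =>
      rcases eq_or_ne k l with rfl | hkl
      · simp [subdiag, sum_apply, single_apply]
      · simp [subdiag, sum_apply, single_apply, ite_and, Fin.val_ne_iff.mpr hkl.symm, hkl.symm]

theorem superdiag_mul_subdiag (a b : Fin m → R) :
    superdiag a * subdiag b = diagonal (Fin.snoc (α := fun _ => R) (a * b) 0) := by
  rw [← sum_single_eq_diagonal, Fin.sum_univ_castSucc]
  simp only [superdiag, subdiag, Fin.snoc_castSucc, Fin.snoc_last, single_zero, add_zero,
    Finset.mul_sum, Finset.sum_mul]
  refine Finset.sum_congr rfl fun i _ => ?_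
  rw [Finset.sum_eq_single i (fun j _ hj => single_mul_single_of_ne _ _ _ _
    (Fin.succ_injective _ |>.ne hj) _) (by simp), single_mul_single_same, Pi.mul_apply]

theorem subdiag_mul_superdiag (a b : Fin m → R) :
    subdiag b * superdiag a = diagonal (Fin.cons (α := fun _ => R) 0 (b * a)) := by
  rw [← sum_single_eq_diagonal, Fin.sum_univ_succ]
  simp only [superdiag, subdiag, Fin.cons_succ, Fin.cons_zero, single_zero, zero_add,
    Finset.mul_sum, Finset.sum_mul]
  refine Finset.sum_congr rfl fun i _ => ?_
  rw [Finset.sum_eq_single i (fun j _ hj => single_mul_single_of_ne _ _ _ _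
    (Fin.castSucc_injective _ |>.ne hj) _) (by simp), single_mul_single_same, Pi.mul_apply]

theorem lie_superdiag_subdiag (a b : Fin m → R) :
    ⁅superdiag a, subdiag b⁆ =
      diagonal (Fin.snoc (α := fun _ => R) (a * b) 0 - Fin.cons (α := fun _ => R) 0 (a * b)) := by
  rw [Ring.lie_def, superdiag_mul_subdiag, subdiag_mul_superdiag, mul_comm b, diagonal_sub]
  rfl

theorem trace_superdiag (a : Fin m → R) : (superdiag a).trace = 0 := by
  rw [superdiag, trace_sum]
  exact Finset.sum_eq_zero fun i _ => trace_single_eq_of_ne _ _ _ Fin.castSucc_lt_succ.ne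

theorem trace_subdiag (a : Fin m → R) : (subdiag a).trace = 0 := by
  rw [subdiag, trace_sum]
  exact Finset.sum_eq_zero fun i _ => trace_single_eq_of_ne _ _ _ Fin.castSucc_lt_succ.ne'

end Matrix

theorem Fin.snoc_sub_cons_partialSums {K : Type*} [Field K] {m : ℕ} (α : Fin (m + 1) → K)
    (h : ∑ i, α i = 0) :
    let c : Fin m → K := fun k => ∑ i ∈ Finset.univ.filter (fun i : Fin (m + 1) => (i : ℕ) ≤ k), α i
    Fin.snoc (α := fun _ => K) c 0 - Fin.cons (α := fun _ => K) 0 c = α := by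
  intro c
  have hsnoc : ∀ j : Fin (m + 1), Fin.snoc (α := fun _ => K) c 0 j =
      ∑ i ∈ Finset.univ.filter (fun i : Fin (m + 1) => (i : ℕ) ≤ j), α i := by
    intro j
    induction j using Fin.lastCases with
    | last =>
      rw [Fin.snoc_last, Finset.filter_true_of_mem fun i _ => Nat.lt_succ_iff.mp i.isLt, h]
    | cast k => simp [c]
  have hcons : ∀ j : Fin (m + 1), Fin.cons (α := fun _ => K) 0 c j =
      ∑ i ∈ Finset.univ.filter (fun i : Fin (m + 1) => (i : ℕ) < j), α i := by
    intro j
    induction j using Fin.cases with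
    | zero => simp
    | succ k => simp [c]
  funext j
  have hdiff : ∀ i, ((if i ≤ j then α i else 0) - if i < j then α i else 0)
      = if i = j then α i else 0 := by
    intro i
    rcases lt_trichotomy i j with h | rfl | h
    · simp [h.le, h, h.ne]
    · simp
    · simp [h.not_ge, h.not_gt, h.ne']
  rw [Pi.sub_apply, hsnoc, hcons, Finset.sum_filter, Finset.sum_filter, ← Finset.sum_sub_distrib]
  simp only [Fin.val_fin_le, Fin.val_fin_lt, hdiff, Finset.sum_ite_eq', Finset.mem_univ, if_true]

/-- If `α₁, …, αₙ` sum to zero, consecutive differences are nonzero and pairwise distinct,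
and all proper initial partial sums `sₖ` are nonzero, then the nilpotent matrices
`A = ∑ E_{i,i+1}` and `B = ∑ sᵢ E_{i+1,i}` generate `sl_n(K)`. -/
theorem stmt_11 {K : Type} [Field K] (n : ℕ) (hn : 2 ≤ n) (α : Fin n → K)
    (h1 : ∑ i, α i = 0)
    (h3 : ∀ i k : ℕ, (hi : i + 1 < n) → (hk : k + 1 < n) →
      α ⟨i + 1, hi⟩ - α ⟨i, by omega⟩ = α ⟨k + 1, hk⟩ - α ⟨k, by omega⟩ → i = k)
    (h4 : ∀ k : ℕ, 1 ≤ k → k ≤ n - 1 →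
      ∑ i ∈ Finset.univ.filter (fun i : Fin n => (i : ℕ) < k), α i ≠ 0) :
    LieSubalgebra.lieSpan K (Matrix (Fin n) (Fin n) K)
      {Matrix.of fun i j : Fin n => if (i : ℕ) + 1 = (j : ℕ) then (1 : K) else 0,
       Matrix.of fun i j : Fin n => if (i : ℕ) = (j : ℕ) + 1 then
          ∑ i' ∈ Finset.univ.filter (fun i' : Fin n => (i' : ℕ) ≤ (j : ℕ)), α i'
        else 0} =
      LieAlgebra.SpecialLinear.sl (Fin n) K := by
  obtain ⟨m, rfl⟩ : ∃ m, n = m + 1 := ⟨n - 1, by omega⟩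
  rw [of_eq_superdiag, of_eq_subdiag]
  set c : Fin m → K := fun k =>
    ∑ i ∈ Finset.univ.filter (fun i : Fin (m + 1) => (i : ℕ) ≤ k), α i
  set L := LieSubalgebra.lieSpan K _ {superdiag fun _ => (1 : K), subdiag c}
  have hA : superdiag (fun _ => (1 : K)) ∈ L := LieSubalgebra.subset_lieSpan (Set.mem_insert _ _)
  have hB : subdiag c ∈ L := LieSubalgebra.subset_lieSpan (Set.mem_insert_of_mem _ rfl)
  have hD : diagonal α ∈ L := by
    have := L.lie_mem hA hB
    rwa [lie_superdiag_subdiag, show (fun _ => (1 : K)) * c = c from one_mul c,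
      Fin.snoc_sub_cons_partialSums α h1] at this
  have hinj : Function.Injective fun k : Fin m => α k.succ - α k.castSucc :=
    fun i k h => Fin.ext (h3 i k (by omega) (by omega) h)
  have hup (k : Fin m) : single k.castSucc k.succ (1 : K) ∈ L :=
    single_mem_of_sum_single_mem hD
      (fun i k h => hinj (neg_injective (by simpa only [neg_sub] using h))) _ hA k
  have hdown (k : Fin m) : single k.succ k.castSucc (1 : K) ∈ L := by
    have hck : c k ≠ 0 := by
      convert h4 (k + 1) (by omega) (by omega) using 2
      ext i
      simp
    simpa [smul_single, hck] using
      L.smul_mem (c k)⁻¹ (single_mem_of_sum_single_mem hD hinj c hB k)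
  refine le_antisymm (LieSubalgebra.lieSpan_le.mpr ?_)
    (sl_le_of_single_mem (single_mem_of_single_castSucc_succ_mem hup hdown))
  rintro X (rfl | rfl)
  exacts [trace_superdiag _, trace_subdiag _]
end

section
/- Let K be a field of characteristic different from 2 and let n ≥ 4 be even. Then the matrices M = Σ_{i=1}^{n−1} E_{i,i+1} (the upper shift matrix) and N = E_{n1} do NOT generate the Lie algebra sl_n(K). -/
/-!
For even `n`, the matrix `J` with `J i (n-1-i) = (-1)^i` and zeros elsewhere is the Gram matrix
of a nondegenerate alternating form. The shift `M` and the corner `N = E_{n1}` are both skew-adjoint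
for `J`, so the Lie algebra they generate lies in the symplectic algebra of `J`, which for `n ≥ 3`
misses the traceless matrix `E_{12}`.
-/

attribute [local instance 100] LieRing.ofAssociativeRing

open Matrix

namespace Matrix

def upperShift (n : ℕ) (R : Type*) [Zero R] [One R] : Matrix (Fin n) (Fin n) R :=
  of fun i j => if (i : ℕ) + 1 = (j : ℕ) then 1 else 0

def lowerLeftCorner (n : ℕ) (R : Type*) [Zero R] [One R] : Matrix (Fin n) (Fin n) R :=
  of fun i j => if (i : ℕ) = n - 1 ∧ (j : ℕ) = 0 then 1 else 0

def signedAntidiagonal (n : ℕ) (R : Type*) [Ring R] : Matrix (Fin n) (Fin n) R :=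
  of fun i j => if j = i.rev then (-1) ^ (i : ℕ) else 0

variable {R : Type*} [CommRing R] {n : ℕ}

lemma transpose_mul_signedAntidiagonal_apply (X : Matrix (Fin n) (Fin n) R) (k l : Fin n) :
    (Xᵀ * signedAntidiagonal n R) k l = X l.rev k * (-1) ^ (l.rev : ℕ) := by
  simp [mul_apply, signedAntidiagonal, Fin.rev_eq_iff, eq_comm (a := l)]

lemma signedAntidiagonal_mul_apply (X : Matrix (Fin n) (Fin n) R) (k l : Fin n) :
    (signedAntidiagonal n R * X) k l = (-1) ^ (k : ℕ) * X k.rev l := by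
  simp [mul_apply, signedAntidiagonal]

lemma mem_skewAdjoint_signedAntidiagonal_iff {X : Matrix (Fin n) (Fin n) R} :
    X ∈ skewAdjointMatricesLieSubalgebra (signedAntidiagonal n R) ↔
      ∀ k l : Fin n, X l.rev k * (-1) ^ (l.rev : ℕ) = -((-1) ^ (k : ℕ) * X k.rev l) := by
  rw [mem_skewAdjointMatricesLieSubalgebra, mem_skewAdjointMatricesSubmodule,
    Matrix.IsSkewAdjoint, Matrix.IsAdjointPair, ← Matrix.ext_iff]
  simp only [transpose_mul_signedAntidiagonal_apply, mul_neg, neg_apply,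
    signedAntidiagonal_mul_apply]

lemma upperShift_mem_skewAdjoint :
    upperShift n R ∈ skewAdjointMatricesLieSubalgebra (signedAntidiagonal n R) := by
  refine mem_skewAdjoint_signedAntidiagonal_iff.mpr fun k l => ?_
  have hk := k.isLt
  have hl := l.isLt
  simp only [upperShift, of_apply, Fin.val_rev]
  split_ifs with h h' h'
  · rw [← h, pow_succ]
    ring
  all_goals first | omega | simp

lemma lowerLeftCorner_mem_skewAdjoint (hn : Even n) :
    lowerLeftCorner n R ∈ skewAdjointMatricesLieSubalgebra (signedAntidiagonal n R) := by
  refine mem_skewAdjoint_signedAntidiagonal_iff.mpr fun k l => ?_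
  have hk := k.isLt
  have hl := l.isLt
  simp only [lowerLeftCorner, of_apply, Fin.val_rev]
  split_ifs with h h' h'
  · have hodd : Odd (n - 1) := Nat.Even.sub_odd (by omega) hn odd_one
    rw [h.1, h.2, hodd.neg_one_pow]
    simp
  all_goals first | omega | simp

lemma single_zero_one_notMem_skewAdjoint [Nontrivial R] (hn : 3 ≤ n) :
    single (⟨0, by omega⟩ : Fin n) ⟨1, by omega⟩ (1 : R) ∉
      skewAdjointMatricesLieSubalgebra (signedAntidiagonal n R) := by
  rw [mem_skewAdjoint_signedAntidiagonal_iff]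
  intro h
  have := h ⟨1, by omega⟩ ⟨n - 1, by omega⟩
  simp only [single_apply, Fin.ext_iff, Fin.val_rev, show n - (n - 1 + 1) = 0 by omega] at this
  simp [show ¬ (0 = n - (1 + 1)) by omega] at this

end Matrix

open LieAlgebra.SpecialLinear in
theorem stmt_14_general {K : Type} [Field K]
    (n : ℕ) (hn : 4 ≤ n) (heven : Even n) :
    LieSubalgebra.lieSpan K (Matrix (Fin n) (Fin n) K)
      {Matrix.of fun i j : Fin n => if (i : ℕ) + 1 = (j : ℕ) then (1 : K) else 0,
       Matrix.of fun i j : Fin n =>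
        if (i : ℕ) = n - 1 ∧ (j : ℕ) = 0 then (1 : K) else 0} ≠
      LieAlgebra.SpecialLinear.sl (Fin n) K := by
  change LieSubalgebra.lieSpan K _ {upperShift n K, lowerLeftCorner n K} ≠ _
  intro hspan
  have hle : LieSubalgebra.lieSpan K _ {upperShift n K, lowerLeftCorner n K} ≤
      skewAdjointMatricesLieSubalgebra (signedAntidiagonal n K) := by
    rw [LieSubalgebra.lieSpan_le]
    rintro _ (rfl | rfl)
    exacts [upperShift_mem_skewAdjoint, lowerLeftCorner_mem_skewAdjoint heven]
  have hij : (⟨0, by omega⟩ : Fin n) ≠ ⟨1, by omega⟩ := by simp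
  refine single_zero_one_notMem_skewAdjoint (by omega) (hle ?_)
  rw [hspan, ← val_single _ _ hij]
  exact (single _ _ hij 1).2

/-- In characteristic ≠ 2, for even `n ≥ 4`, the upper shift matrix `M = ∑ E_{i,i+1}` and
`N = E_{n,1}` do not generate `sl_n(K)`. -/
theorem stmt_14 {K : Type} [Field K] (h2 : (2 : K) ≠ 0)
    (n : ℕ) (hn : 4 ≤ n) (heven : Even n) :
    LieSubalgebra.lieSpan K (Matrix (Fin n) (Fin n) K)
      {Matrix.of fun i j : Fin n => if (i : ℕ) + 1 = (j : ℕ) then (1 : K) else 0,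
       Matrix.of fun i j : Fin n =>
        if (i : ℕ) = n - 1 ∧ (j : ℕ) = 0 then (1 : K) else 0} ≠
      LieAlgebra.SpecialLinear.sl (Fin n) K :=
  stmt_14_general n hn heven
end

section
/- Let F_2 be the field with two elements. There does not exist a nilpotent 3×3 matrix Y over F_2 such that the matrix unit E_{12} and Y generate the Lie algebra sl_3(F_2). -/
/-!
For any matrix `J`, the matrices `X` with `Xᵀ J = -J X` form a Lie subalgebra, and for `n ≥ 3` it
contains `sl_n` only when `J = 0`: testing the condition on the matrix units `E_ij`, `i ≠ j`, kills
every entry of `J`. So it suffices to find, for every nilpotent `Y` over `F₂` (equivalently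
`Y³ = 0`), a nonzero `J` for which both `E₁₂` and `Y` are skew-adjoint; a list of nine such forms
covers all of them, which is a finite check.
-/

attribute [local instance 100] LieRing.ofAssociativeRing

open Matrix LieAlgebra.SpecialLinear

section

variable {R n : Type*} [CommRing R] [Fintype n] [DecidableEq n]

theorem Matrix.pow_card_eq_zero_of_isNilpotent [IsReduced R] {M : Matrix n n R}
    (hM : IsNilpotent M) : M ^ Fintype.card n = 0 := by
  have hchar : M.charpoly = Polynomial.X ^ Fintype.card n := by
    rw [← sub_eq_zero]
    ext i
    exact (Polynomial.isNilpotent_iff.mp (isNilpotent_charpoly_sub_pow_of_isNilpotent hM) i).eq_zero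
  simpa [hchar] using aeval_self_charpoly M

theorem mem_skewAdjointMatricesLieSubalgebra_iff {J A : Matrix n n R} :
    A ∈ skewAdjointMatricesLieSubalgebra J ↔ Aᵀ * J = J * -A := by
  simp [Matrix.IsSkewAdjoint, Matrix.IsAdjointPair]

theorem eq_zero_of_sl_le_skewAdjointMatricesLieSubalgebra {J : Matrix n n R}
    (hn : 3 ≤ Fintype.card n) (h : sl n R ≤ skewAdjointMatricesLieSubalgebra J) : J = 0 := by
  ext i k
  obtain ⟨j, hji, hjk⟩ := ENat.exists_ne_ne_of_three_le (by simpa using hn) i k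
  have hskew : (single i j 1 : Matrix n n R)ᵀ * J = J * -single i j 1 :=
    mem_skewAdjointMatricesLieSubalgebra_iff.mp (h (trace_single_eq_of_ne i j 1 hji.symm))
  simpa [hjk.symm] using congr_fun₂ hskew j k

theorem lieSpan_ne_sl_of_subset_skewAdjoint {J : Matrix n n R} {s : Set (Matrix n n R)}
    (hn : 3 ≤ Fintype.card n) (hJ : J ≠ 0) (hs : s ⊆ skewAdjointMatricesLieSubalgebra J) :
    LieSubalgebra.lieSpan R (Matrix n n R) s ≠ sl n R := fun h ↦
  hJ <| eq_zero_of_sl_le_skewAdjointMatricesLieSubalgebra hn <| h ▸ LieSubalgebra.lieSpan_le.mpr hs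

end

/- Found by exhaustive search among the forms making `E₁₂` skew-adjoint, which are those with
`J₀₀ = J₀₂ = J₂₀ = 0` and `J₀₁ = J₁₀`. -/
def e12SkewForms : List (Matrix (Fin 3) (Fin 3) (ZMod 2)) :=
  [!![0,0,0;0,1,0;0,0,0], !![0,0,0;0,0,0;0,0,1], !![0,0,0;0,1,1;0,1,1],
   !![0,1,0;1,1,1;0,1,1], !![0,1,0;1,1,0;0,0,1], !![0,1,0;1,0,0;0,0,0],
   !![0,1,0;1,0,0;0,0,1], !![0,1,0;1,0,1;0,1,0], !![0,1,0;1,0,1;0,1,1]]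

set_option maxRecDepth 100000 in
theorem ne_zero_and_single_skewAdjoint_of_mem_e12SkewForms :
    ∀ J ∈ e12SkewForms, J ≠ 0 ∧ (single 0 1 1)ᵀ * J = J * -single 0 1 1 := by
  decide

set_option maxRecDepth 100000 in
theorem exists_mem_e12SkewForms_of_pow_three_eq_zero :
    ∀ Y : Matrix (Fin 3) (Fin 3) (ZMod 2), Y ^ 3 = 0 → ∃ J ∈ e12SkewForms, Yᵀ * J = J * -Y := by
  decide

/-- Over the field with two elements, there is no nilpotent `3 × 3` matrix `Y` such that
`E₁₂` and `Y` generate `sl₃(F₂)`. -/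
theorem stmt_17 :
    ¬ ∃ Y : Matrix (Fin 3) (Fin 3) (ZMod 2), IsNilpotent Y ∧
      LieSubalgebra.lieSpan (ZMod 2) (Matrix (Fin 3) (Fin 3) (ZMod 2))
        {Matrix.single (0 : Fin 3) (1 : Fin 3) (1 : ZMod 2), Y} =
        LieAlgebra.SpecialLinear.sl (Fin 3) (ZMod 2) := by
  rintro ⟨Y, hY, hspan⟩
  obtain ⟨J, hJ, hYJ⟩ :=
    exists_mem_e12SkewForms_of_pow_three_eq_zero Y (pow_card_eq_zero_of_isNilpotent hY)
  obtain ⟨hJ0, hEJ⟩ := ne_zero_and_single_skewAdjoint_of_mem_e12SkewForms J hJ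
  refine lieSpan_ne_sl_of_subset_skewAdjoint (by simp) hJ0 ?_ hspan
  rintro X (rfl | rfl) <;> exact mem_skewAdjointMatricesLieSubalgebra_iff.mpr ‹_›
end

section
/- Let K be a field, n ≥ 2, let T be a consistent diagonal n×n matrix over K, and let A be an n×n matrix over K all of whose off-diagonal entries are nonzero. Define A_1 = [T,A] and A_i = [T,A_{i−1}] for i = 2,…,n²−n, where [X,Y] = XY − YX. Then the matrices A_1,…,A_{n²−n} all have zero diagonal, are linearly independent, and form a basis of the space of n×n matrices over K with zero diagonal. -/
/-! The bracket with `diagonal α` scales the entry `(i, j)` by `α i - α j`, so the `(i, j)` entry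
of `A_k` is `(α i - α j) ^ k * A i j`. Consistency makes the `n² - n` off-diagonal differences
distinct and nonzero, so a relation `∑ c_k A_k = 0` says that the polynomial `∑ c_k X ^ (k - 1)`, of
degree `< n² - n`, vanishes at `n² - n` distinct points. Independence of `n² - n` matrices with zero
diagonal then gives the span by counting dimensions. -/

open Polynomial in
theorem linearIndependent_pow_succ_mul {K ι : Type*} [Field K] [Fintype ι] {g a : ι → K}
    (hg : Function.Injective g) (hg0 : ∀ p, g p ≠ 0) (ha0 : ∀ p, a p ≠ 0) {m : ℕ}
    (hm : m ≤ Fintype.card ι) :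
    LinearIndependent K (fun (k : Fin m) (p : ι) => g p ^ ((k : ℕ) + 1) * a p) := by
  rw [Fintype.linearIndependent_iff]
  intro c hc
  set Q : K[X] := ∑ k : Fin m, C (c k) * X ^ (k : ℕ)
  have hQ_eval : ∀ p ∈ Finset.univ, Q.eval (g p) = 0 := fun p _ => by
    have hp : Q.eval (g p) * (g p * a p) = 0 := calc
      _ = ∑ k, c k * (g p ^ ((k : ℕ) + 1) * a p) := by
        simp only [Q, eval_finsetSum, eval_mul, eval_C, eval_pow, eval_X, Finset.sum_mul]
        exact Finset.sum_congr rfl fun k _ => by ring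
      _ = 0 := by simpa using congrFun hc p
    exact (mul_eq_zero.1 hp).resolve_right (mul_ne_zero (hg0 p) (ha0 p))
  have hQ : Q = 0 := eq_zero_of_degree_lt_of_eval_index_eq_zero _ hg.injOn
    ((degree_sum_fin_lt c).trans_le (by simpa using hm)) hQ_eval
  intro k
  simpa [Q, finsetSum_coeff, coeff_C_mul, coeff_X_pow, Fin.val_inj] using congrArg (coeff · k) hQ

theorem card_subtype_fst_ne_snd {ι : Type*} [Fintype ι] [DecidableEq ι] :
    Fintype.card {p : ι × ι // p.1 ≠ p.2} = Fintype.card ι ^ 2 - Fintype.card ι := by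
  rw [Fintype.card_subtype, sq, ← Finset.card_univ, ← Finset.offDiag_card]
  congr 1
  ext
  simp [Finset.mem_offDiag]

theorem finrank_ker_diagLinearMap {K ι : Type*} [Field K] [Fintype ι] [DecidableEq ι] :
    Module.finrank K (LinearMap.ker (Matrix.diagLinearMap ι K K)) =
      Fintype.card ι ^ 2 - Fintype.card ι := by
  have hsurj : LinearMap.range (Matrix.diagLinearMap ι K K) = ⊤ :=
    LinearMap.range_eq_top.2 fun d => ⟨Matrix.diagonal d, Matrix.diag_diagonal d⟩
  have := LinearMap.finrank_range_add_finrank_ker (Matrix.diagLinearMap ι K K)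
  rw [hsurj, finrank_top, Module.finrank_matrix, Module.finrank_self,
    Module.finrank_fintype_fun_eq_card, mul_one, ← sq] at this
  omega

section IterateLie

variable {K ι : Type*} [Field K] [Fintype ι] [DecidableEq ι]

theorem lie_diagonal_apply (d : ι → K) (M : Matrix ι ι K) (i j : ι) :
    ⁅Matrix.diagonal d, M⁆ i j = (d i - d j) * M i j := by
  rw [Ring.lie_def, Matrix.sub_apply, Matrix.diagonal_mul, Matrix.mul_diagonal]
  ring

theorem iterate_lie_diagonal_apply (d : ι → K) (M : Matrix ι ι K) (k : ℕ) (i j : ι) :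
    ((fun X => ⁅Matrix.diagonal d, X⁆)^[k] M) i j = (d i - d j) ^ k * M i j := by
  induction k with
  | zero => simp
  | succ k ih =>
    rw [Function.iterate_succ_apply', lie_diagonal_apply, ih, pow_succ, mul_assoc, mul_left_comm]

theorem linearIndependent_iterate_lie_diagonal {d : ι → K} (hd : ∀ i j, i ≠ j → d i ≠ d j)
    (hdiff : ∀ i j k l, i ≠ j → d i - d j = d k - d l → i = k ∧ j = l)
    {A : Matrix ι ι K} (hA : ∀ i j, i ≠ j → A i j ≠ 0) {m : ℕ}
    (hm : m ≤ Fintype.card ι ^ 2 - Fintype.card ι) :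
    LinearIndependent K fun k : Fin m => (fun X => ⁅Matrix.diagonal d, X⁆)^[(k : ℕ) + 1] A := by
  let offDiagEntries : Matrix ι ι K →ₗ[K] {p : ι × ι // p.1 ≠ p.2} → K :=
    LinearMap.pi fun p => Matrix.entryLinearMap K K p.1.1 p.1.2
  refine .of_comp offDiagEntries ?_
  have hinj : Function.Injective fun p : {p : ι × ι // p.1 ≠ p.2} => d p.1.1 - d p.1.2 :=
    fun p q h => Subtype.ext (Prod.ext_iff.2 (hdiff _ _ _ _ p.2 h))
  convert linearIndependent_pow_succ_mul hinj (fun p => sub_ne_zero.2 (hd _ _ p.2))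
    (fun p => hA _ _ p.2) (hm.trans card_subtype_fst_ne_snd.ge) using 1
  ext k p
  exact iterate_lie_diagonal_apply d A _ _ _

theorem span_eq_ker_diagLinearMap {κ : Type*} [Fintype κ]
    (hκ : Fintype.card κ = Fintype.card ι ^ 2 - Fintype.card ι) {v : κ → Matrix ι ι K}
    (hv : LinearIndependent K v) (hdiag : ∀ k, (v k).diag = 0) :
    Submodule.span K (Set.range v) = LinearMap.ker (Matrix.diagLinearMap ι K K) := by
  refine Submodule.eq_of_le_of_finrank_eq ?_ ?_
  · rw [Submodule.span_le]
    rintro _ ⟨k, rfl⟩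
    exact hdiag k
  · rw [finrank_span_eq_card hv, hκ, finrank_ker_diagLinearMap]

end IterateLie

theorem stmt_18_general {K : Type} [Field K] (n : ℕ)
    (α : Fin n → K) (hα : IsConsistent α)
    (A : Matrix (Fin n) (Fin n) K) (hoff : ∀ i j, i ≠ j → A i j ≠ 0)
    (f : Fin (n ^ 2 - n) → Matrix (Fin n) (Fin n) K)
    (hf : f = fun k : Fin (n ^ 2 - n) => (fun M => ⁅Matrix.diagonal α, M⁆)^[(k : ℕ) + 1] A) :
    (∀ k, ∀ i, f k i i = 0) ∧
    LinearIndependent K f ∧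
    (Submodule.span K (Set.range f) : Set (Matrix (Fin n) (Fin n) K)) =
      {M | ∀ i, M i i = 0} := by
  obtain ⟨-, -, hdist, hdiff⟩ := hα
  have hdiag : ∀ k i, f k i i = 0 := fun k i => by
    simpa [hf] using iterate_lie_diagonal_apply α A ((k : ℕ) + 1) i i
  have hli : LinearIndependent K f := hf ▸ linearIndependent_iterate_lie_diagonal hdist
    (fun i j k l hij h => (hdiff i j k l h).resolve_left fun h => hij h.1) hoff (by simp)
  refine ⟨hdiag, hli, ?_⟩
  rw [span_eq_ker_diagLinearMap (by simp) hli fun k => funext (hdiag k)]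
  ext M
  simp [funext_iff]

/-- If `T` is a consistent diagonal matrix and `A` has all off-diagonal entries nonzero,
then the iterated brackets `A₁ = [T,A]`, `Aᵢ = [T,Aᵢ₋₁]` for `i = 1, …, n² - n` all have
zero diagonal, are linearly independent, and form a basis of the space of matrices with
zero diagonal. -/
theorem stmt_18 {K : Type} [Field K] (n : ℕ) (hn : 2 ≤ n)
    (α : Fin n → K) (hα : IsConsistent α)
    (A : Matrix (Fin n) (Fin n) K) (hoff : ∀ i j, i ≠ j → A i j ≠ 0)
    (f : Fin (n ^ 2 - n) → Matrix (Fin n) (Fin n) K)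
    (hf : f = fun k : Fin (n ^ 2 - n) => (fun M => ⁅Matrix.diagonal α, M⁆)^[(k : ℕ) + 1] A) :
    (∀ k, ∀ i, f k i i = 0) ∧
    LinearIndependent K f ∧
    (Submodule.span K (Set.range f) : Set (Matrix (Fin n) (Fin n) K)) =
      {M | ∀ i, M i i = 0} :=
  stmt_18_general n α hα A hoff f hf
end
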